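/- Define a type-BC unit interval order on n elements to be a partial order P on an n-element set that contains no induced subposet isomorphic to the disjoint union of two 2-element chains nor to the disjoint union of a 3-element chain and a 1-element chain, together with a subset C of the minimal elements of P (the grounded elements) such that β(c) ≤ β(d) for all c ∈ C and d ∉ C, where β(y) = #{x : x ≤_P y} − #{z : z ≥_P y}; an isomorphism of such objects is an order isomorphism carrying grounded set onto grounded set. Then for every w ∈ B_n whose window avoids the five signed patterns 1 2̄, 2̄ 1, 2̄ 1̄, 3 1 2, 3 1̄ 2, the pair (Q(w), {1,…,p}) is a type-BC unit interval order on n elements, and the assignment w ↦ (Q(w), {1,…,p}) induces a bijection from the set of elements of B_n whose windows avoid the five signed patterns onto the set of isomorphism classes of type-BC unit interval orders on n elements. -/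

import Mathlib

open scoped BigOperators

/-- Membership in the hyperoctahedral group `B_n`, viewed as permutations `w` of `ℤ`
satisfying `w (-i) = - w i` and fixing everything outside `{-n, …, -1, 1, …, n}`. -/
def IsBn (n : ℕ) (w : Equiv.Perm ℤ) : Prop :=
  (∀ i : ℤ, w (-i) = - w i) ∧ ∀ i : ℤ, (n : ℤ) < |i| → w i = i

/-- The window of `w` avoids the signed pattern `1 2̄`. -/
def Avoids12bar (n : ℕ) (w : Equiv.Perm ℤ) : Prop :=
  ¬ ∃ i j : ℤ, 1 ≤ i ∧ i < j ∧ j ≤ (n : ℤ) ∧ 0 < w i ∧ w j < 0 ∧ w i < -(w j)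

/-- The window of `w` avoids the signed pattern `2̄ 1`. -/
def Avoids2bar1 (n : ℕ) (w : Equiv.Perm ℤ) : Prop :=
  ¬ ∃ i j : ℤ, 1 ≤ i ∧ i < j ∧ j ≤ (n : ℤ) ∧ w i < 0 ∧ 0 < w j ∧ w j < -(w i)

/-- The window of `w` avoids the signed pattern `2̄ 1̄`. -/
def Avoids2bar1bar (n : ℕ) (w : Equiv.Perm ℤ) : Prop :=
  ¬ ∃ i j : ℤ, 1 ≤ i ∧ i < j ∧ j ≤ (n : ℤ) ∧ w i < w j ∧ w j < 0

/-- The window of `w` avoids the signed pattern `3 1 2`. -/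
def Avoids312s (n : ℕ) (w : Equiv.Perm ℤ) : Prop :=
  ¬ ∃ i j k : ℤ, 1 ≤ i ∧ i < j ∧ j < k ∧ k ≤ (n : ℤ) ∧ 0 < w j ∧ w j < w k ∧ w k < w i

/-- The window of `w` avoids the signed pattern `3 1̄ 2`. -/
def Avoids31bar2 (n : ℕ) (w : Equiv.Perm ℤ) : Prop :=
  ¬ ∃ i j k : ℤ, 1 ≤ i ∧ i < j ∧ j < k ∧ k ≤ (n : ℤ) ∧
    w j < 0 ∧ 0 < w k ∧ w k < w i ∧ -(w j) < w k

/-- The window of `w` avoids the five signed patterns `1 2̄`, `2̄ 1`, `2̄ 1̄`, `3 1 2`, `3 1̄ 2`. -/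
def AvoidsFive (n : ℕ) (w : Equiv.Perm ℤ) : Prop :=
  Avoids12bar n w ∧ Avoids2bar1 n w ∧ Avoids2bar1bar n w ∧ Avoids312s n w ∧ Avoids31bar2 n w

/-- The long one-line notation `(w(-n), …, w(-1), w(1), …, w(n))` avoids the pattern `3412`. -/
def LongAvoids3412 (n : ℕ) (w : Equiv.Perm ℤ) : Prop :=
  ¬ ∃ i1 i2 i3 i4 : ℤ, -(n : ℤ) ≤ i1 ∧ i1 < i2 ∧ i2 < i3 ∧ i3 < i4 ∧ i4 ≤ (n : ℤ) ∧
    i1 ≠ 0 ∧ i2 ≠ 0 ∧ i3 ≠ 0 ∧ i4 ≠ 0 ∧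
    w i3 < w i4 ∧ w i4 < w i1 ∧ w i1 < w i2

/-- The long one-line notation `(w(-n), …, w(-1), w(1), …, w(n))` avoids the pattern `4231`. -/
def LongAvoids4231 (n : ℕ) (w : Equiv.Perm ℤ) : Prop :=
  ¬ ∃ i1 i2 i3 i4 : ℤ, -(n : ℤ) ≤ i1 ∧ i1 < i2 ∧ i2 < i3 ∧ i3 < i4 ∧ i4 ≤ (n : ℤ) ∧
    i1 ≠ 0 ∧ i2 ≠ 0 ∧ i3 ≠ 0 ∧ i4 ≠ 0 ∧
    w i4 < w i2 ∧ w i2 < w i3 ∧ w i3 < w i1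

/-- `p`, the number of negative letters in the window `(w 1, …, w n)`. -/
noncomputable def negCount (n : ℕ) (w : Equiv.Perm ℤ) : ℕ :=
  ((Finset.Icc (1 : ℤ) (n : ℤ)).filter (fun i => w i < 0)).card

/-- `m_j = max ({p} ∪ {w 1, …, w j})`. -/
noncomputable def mval (n : ℕ) (w : Equiv.Perm ℤ) (j : ℤ) : ℤ :=
  (insert ((negCount n w : ℤ)) ((Finset.Icc (1 : ℤ) j).image (fun i => w i))).max'
    (Finset.insert_nonempty _ _)

/-- The strict order `Q(w)` on `{1, …, n}`: `j <_{Q(w)} i` iff `i > m_j`. -/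
def qlt (n : ℕ) (w : Equiv.Perm ℤ) (j i : ℤ) : Prop := mval n w j < i

/-- `i` and `j` are incomparable in `Q(w)`. -/
def QIncomp (n : ℕ) (w : Equiv.Perm ℤ) (i j : ℤ) : Prop :=
  i ≠ j ∧ ¬ qlt n w i j ∧ ¬ qlt n w j i

/-- The order `Q(w)` transported to `Fin n` (element `i : Fin n` stands for `i + 1`). -/
def qltF (n : ℕ) (w : Equiv.Perm ℤ) (j i : Fin n) : Prop :=
  mval n w (((j : ℕ) : ℤ) + 1) < ((i : ℕ) : ℤ) + 1

/-- The grounded elements of `Q(w)`, transported to `Fin n`. -/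
def groundedF (n : ℕ) (w : Equiv.Perm ℤ) : Set (Fin n) :=
  {i : Fin n | (i : ℕ) + 1 ≤ negCount n w}

/-- Incomparability for a strict relation. -/
def Incomp {n : ℕ} (lt : Fin n → Fin n → Prop) (x y : Fin n) : Prop :=
  x ≠ y ∧ ¬ lt x y ∧ ¬ lt y x

/-- `β(y) = #{x : x ≤ y} - #{z : z ≥ y}`. -/
noncomputable def betaVal {n : ℕ} (lt : Fin n → Fin n → Prop) (y : Fin n) : ℤ :=
  (Set.ncard {x : Fin n | lt x y ∨ x = y} : ℤ) -
    (Set.ncard {z : Fin n | lt y z ∨ z = y} : ℤ)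

/-- A type-BC unit interval order on `n` elements: a strict partial order containing no
induced `2 + 2` and no induced `3 + 1`, together with a set `g` of grounded elements,
all minimal, such that `β(c) ≤ β(d)` whenever `c` is grounded and `d` is not. -/
def IsBCUIO (n : ℕ) (lt : Fin n → Fin n → Prop) (g : Set (Fin n)) : Prop :=
  (∀ x, ¬ lt x x) ∧
  (∀ x y z, lt x y → lt y z → lt x z) ∧
  (¬ ∃ x y z t : Fin n, lt x y ∧ lt z t ∧
    Incomp lt x z ∧ Incomp lt x t ∧ Incomp lt y z ∧ Incomp lt y t) ∧
  (¬ ∃ x y z t : Fin n, lt x y ∧ lt y z ∧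
    Incomp lt x t ∧ Incomp lt y t ∧ Incomp lt z t) ∧
  (∀ c ∈ g, ∀ x, ¬ lt x c) ∧
  (∀ c ∈ g, ∀ d, d ∉ g → betaVal lt c ≤ betaVal lt d)

/-- Isomorphism of type-BC unit interval orders: an order isomorphism carrying the
grounded set onto the grounded set. -/
def BCIso (n : ℕ) (lt lt' : Fin n → Fin n → Prop) (g g' : Set (Fin n)) : Prop :=
  ∃ e : Equiv (Fin n) (Fin n),
    (∀ i j, lt i j ↔ lt' (e i) (e j)) ∧ ∀ i, i ∈ g ↔ e i ∈ g'

/-!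
If `w` avoids the five patterns, its positive letters are `p + 1, …, n` and its negative
letters are `-1, -2, …, -p` in this order; hence `j ≤ m_j ≤ n`, and `Q(w)` is the threshold
order `j < i ↔ m_j < i` of the weakly increasing sequence `m` with `m_0 = p`. Threshold orders of
such sequences are type-BC unit interval orders, and an isomorphism between two of them matches
the sizes of the strict up-sets `n - m_j`, which are sorted, so it forces equal `p` and `m`.
Conversely, listing the elements of a type-BC unit interval order by increasing `β`, grounded
ones first, exhibits it as the threshold order of `m_0 = #C`, `m_{k+1} = n - #{z | x_k < z}`.

It remains that `w ↦ (p, m)` is a bijection onto these sequences. An avoiding window is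
recovered from `(p, m)` greedily: a new record is `m_j` itself, otherwise the letter is the
largest value of `(p, m_j)` not used yet (pattern `3 1 2`), and if there is none, the next
negative letter (pattern `3 1̄ 2`). Conversely the greedy word of any such `(p, m)` is an avoiding
window with these statistics.
-/

def ThresholdLT {n : ℕ} (M : ℤ → ℤ) (j i : Fin n) : Prop :=
  M ((j : ℕ) + 1) < (i : ℕ) + 1

def groundedSet {n : ℕ} (p : ℕ) : Set (Fin n) :=
  {i | (i : ℕ) + 1 ≤ p}

structure IsThresholdSeq (n p : ℕ) (M : ℤ → ℤ) : Prop where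
  mono : Monotone M
  map_zero : M 0 = p
  map_n_le : M n ≤ n
  self_le : ∀ j : ℤ, 1 ≤ j → j ≤ n → j ≤ M j

theorem betaVal_eq_ncard_sub_ncard {n : ℕ} {lt : Fin n → Fin n → Prop} (hirr : ∀ x, ¬ lt x x)
    (y : Fin n) : betaVal lt y = ({x | lt x y}.ncard : ℤ) - {z | lt y z}.ncard := by
  have hins : ∀ s : Set (Fin n), y ∉ s → (insert y s).ncard = s.ncard + 1 :=
    fun s hy => Set.ncard_insert_of_notMem hy
  have hdown : {x | lt x y ∨ x = y} = insert y {x | lt x y} := by ext; simp [or_comm]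
  have hup : {z | lt y z ∨ z = y} = insert y {z | lt y z} := by ext; simp [or_comm]
  rw [betaVal, hdown, hup, hins {x | lt x y} (hirr y), hins {z | lt y z} (hirr y)]
  push_cast
  ring

theorem ncard_setOf_val_lt {n m : ℕ} (hm : m ≤ n) : {z : Fin n | (z : ℕ) < m}.ncard = m := by
  classical
  rw [Set.ncard_eq_toFinset_card', Set.toFinset_ofPred, Fin.card_filter_val_lt]
  omega

theorem ncard_groundedSet {n p : ℕ} (hp : p ≤ n) : (groundedSet p : Set (Fin n)).ncard = p := by
  have : (groundedSet p : Set (Fin n)) = {z : Fin n | (z : ℕ) < p} := by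
    ext i
    simp only [groundedSet, Set.mem_ofPred_eq]
    omega
  rw [this, ncard_setOf_val_lt hp]

theorem Equiv.ncard_preimage {α : Type*} (e : α ≃ α) (s : Set α) : (e ⁻¹' s).ncard = s.ncard :=
  Set.ncard_preimage_of_injective_subset_range e.injective (by simp)

namespace IsThresholdSeq

variable {n p : ℕ} {M : ℤ → ℤ}

theorem le_n (hM : IsThresholdSeq n p M) {j : ℤ} (hj : j ≤ n) : M j ≤ n :=
  (hM.mono hj).trans hM.map_n_le

theorem p_le (hM : IsThresholdSeq n p M) (j : ℤ) (hj : 0 ≤ j) : (p : ℤ) ≤ M j :=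
  hM.map_zero ▸ hM.mono hj

theorem p_le_n (hM : IsThresholdSeq n p M) : p ≤ n := by
  have := hM.p_le n (by positivity)
  have := hM.map_n_le
  omega

theorem succ_le (hM : IsThresholdSeq n p M) (i : Fin n) : ((i : ℕ) : ℤ) + 1 ≤ M ((i : ℕ) + 1) :=
  hM.self_le _ (by omega) (by omega)

theorem monotone_succ (hM : IsThresholdSeq n p M) : Monotone fun i : Fin n => M ((i : ℕ) + 1) :=
  fun i j hij => hM.mono (by simp only [Fin.le_def] at hij; omega)

theorem isBCUIO_thresholdLT (hM : IsThresholdSeq n p M) :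
    IsBCUIO n (ThresholdLT M) (groundedSet p) := by
  have hself := hM.succ_le
  have hmono : ∀ {i j : Fin n}, (i : ℕ) ≤ j → M ((i : ℕ) + 1) ≤ M ((j : ℕ) + 1) :=
    fun hij => hM.monotone_succ hij
  have hirr : ∀ x : Fin n, ¬ ThresholdLT M x x := fun x => not_lt.2 (hself x)
  refine ⟨hirr, fun x y z hxy hyz => ?_, ?_, ?_, fun c hc x hxc => ?_, fun c hc d hd => ?_⟩
  · have := hself y
    unfold ThresholdLT at *
    omega
  · rintro ⟨x, y, z, t, hxy, hzt, -, ⟨-, hxt, -⟩, ⟨-, -, hzy⟩, -⟩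
    unfold ThresholdLT at *
    omega
  · rintro ⟨x, y, z, t, hxy, hyz, ⟨-, hxt, -⟩, -, ⟨-, -, htz⟩⟩
    unfold ThresholdLT at *
    have := hmono (i := t) (j := y) (by omega)
    have := hself y
    omega
  · have := hM.p_le ((x : ℕ) + 1) (by omega)
    unfold ThresholdLT at hxc
    unfold groundedSet at hc
    grind
  · simp only [groundedSet, Set.mem_ofPred_eq, not_le] at hc hd
    have hup : {z | ThresholdLT M d z} ⊆ {z | ThresholdLT M c z} := fun z hz =>
      lt_of_le_of_lt (hmono (by omega)) hz
    have hdown : {x | ThresholdLT M x c} = ∅ := Set.eq_empty_of_forall_notMem fun x hx => by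
      have := hM.p_le ((x : ℕ) + 1) (by omega)
      simp only [ThresholdLT, Set.mem_ofPred_eq] at hx
      omega
    rw [betaVal_eq_ncard_sub_ncard hirr, betaVal_eq_ncard_sub_ncard hirr, hdown,
      Set.ncard_empty]
    have := Set.ncard_le_ncard hup
    omega

theorem ncard_thresholdLT (hM : IsThresholdSeq n p M) (i : Fin n) :
    ({z | ThresholdLT M i z}.ncard : ℤ) = n - M ((i : ℕ) + 1) := by
  have h1 := hM.succ_le i
  have h2 := hM.le_n (j := (i : ℕ) + 1) (by omega)
  have hcompl : {z | ThresholdLT M i z}ᶜ = {z : Fin n | (z : ℕ) < (M ((i : ℕ) + 1)).toNat} := by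
    ext z
    simp only [ThresholdLT, Set.mem_compl_iff, Set.mem_ofPred_eq]
    omega
  have hsum := Set.ncard_add_ncard_compl {z | ThresholdLT M i z}
  rw [hcompl, ncard_setOf_val_lt (by omega), Nat.card_eq_fintype_card, Fintype.card_fin] at hsum
  omega

theorem eq_of_bcIso {p' : ℕ} {M' : ℤ → ℤ} (hM : IsThresholdSeq n p M)
    (hM' : IsThresholdSeq n p' M')
    (h : BCIso n (ThresholdLT M) (ThresholdLT M') (groundedSet p) (groundedSet p')) :
    p = p' ∧ ∀ j : ℤ, 0 ≤ j → j ≤ n → M j = M' j := by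
  obtain ⟨e, hlt, hg⟩ := h
  have hp : p = p' := by
    rw [← ncard_groundedSet (n := n) hM.p_le_n, ← ncard_groundedSet hM'.p_le_n,
      ← e.ncard_preimage (groundedSet p')]
    exact congrArg Set.ncard (Set.ext hg)
  have hcomp : ∀ i : Fin n, M ((i : ℕ) + 1) = M' ((e i : ℕ) + 1) := fun i => by
    have h1 := hM.ncard_thresholdLT i
    rw [show {z | ThresholdLT M i z} = e ⁻¹' {z | ThresholdLT M' (e i) z} from
      Set.ext fun z => hlt i z, e.ncard_preimage, hM'.ncard_thresholdLT] at h1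
    omega
  -- `i ↦ M (i + 1)` is a monotone rearrangement of the monotone `i ↦ M' (i + 1)`.
  have hsorted := Tuple.unique_monotone (f := fun i : Fin n => M' ((i : ℕ) + 1)) (σ := e) (τ := 1)
    (by convert hM.monotone_succ using 1; exact funext fun i => (hcomp i).symm)
    hM'.monotone_succ
  refine ⟨hp, fun j hj0 hjn => ?_⟩
  rcases hj0.eq_or_lt with rfl | hj
  · rw [hM.map_zero, hM'.map_zero, hp]
  · obtain ⟨k, rfl⟩ : ∃ k : ℕ, j = k + 1 := ⟨(j - 1).toNat, by omega⟩
    have := congrFun hsorted ⟨k, by omega⟩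
    simp only [Function.comp_apply, Equiv.Perm.coe_one, id] at this
    rw [← hcomp] at this
    exact this

end IsThresholdSeq

structure IsUIO {n : ℕ} (lt : Fin n → Fin n → Prop) : Prop where
  irrefl : ∀ x, ¬ lt x x
  trans : ∀ x y z, lt x y → lt y z → lt x z
  no_two_two : ¬ ∃ x y z t : Fin n, lt x y ∧ lt z t ∧
    Incomp lt x z ∧ Incomp lt x t ∧ Incomp lt y z ∧ Incomp lt y t
  no_three_one : ¬ ∃ x y z t : Fin n, lt x y ∧ lt y z ∧
    Incomp lt x t ∧ Incomp lt y t ∧ Incomp lt z t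

section UnitIntervalOrder

variable {n : ℕ} {lt : Fin n → Fin n → Prop}

theorem IsBCUIO.isUIO {g : Set (Fin n)} (h : IsBCUIO n lt g) : IsUIO lt :=
  ⟨h.1, h.2.1, h.2.2.1, h.2.2.2.1⟩

theorem incomp_flip {x y : Fin n} : Incomp (flip lt) x y ↔ Incomp lt x y := by
  unfold Incomp flip
  tauto

theorem betaVal_flip (y : Fin n) : betaVal (flip lt) y = -betaVal lt y := by
  simp only [betaVal, flip]
  ring

theorem IsUIO.flip (h : IsUIO lt) : IsUIO (flip lt) where
  irrefl := h.irrefl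
  trans x y z hxy hyz := h.trans z y x hyz hxy
  no_two_two := by
    rintro ⟨x, y, z, t, hxy, hzt, hxz, hxt, hyz, hyt⟩
    simp only [incomp_flip] at hxz hxt hyz hyt
    exact h.no_two_two ⟨y, x, t, z, hxy, hzt, hyt, hyz, hxt, hxz⟩
  no_three_one := by
    rintro ⟨x, y, z, t, hxy, hyz, hxt, hyt, hzt⟩
    simp only [incomp_flip] at hxt hyt hzt
    exact h.no_three_one ⟨z, y, x, t, hyz, hxy, hzt, hyt, hxt⟩

theorem IsUIO.down_total (h : IsUIO lt) (y z : Fin n) :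
    {x | lt x y} ⊆ {x | lt x z} ∨ {x | lt x z} ⊆ {x | lt x y} := by
  by_contra! hc
  obtain ⟨a, hay, haz⟩ := Set.not_subset.1 hc.1
  obtain ⟨b, hbz, hby⟩ := Set.not_subset.1 hc.2
  simp only [Set.mem_ofPred_eq] at hay haz hbz hby
  have := h.trans
  exact h.no_two_two ⟨a, y, b, z, hay, hbz, by unfold Incomp; grind, by unfold Incomp; grind,
    by unfold Incomp; grind, by unfold Incomp; grind⟩

theorem IsUIO.ncard_up_le_of_ncard_down_lt (h : IsUIO lt) {y z : Fin n}
    (hd : {x | lt x y}.ncard < {x | lt x z}.ncard) :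
    {x | lt z x}.ncard ≤ {x | lt y x}.ncard := by
  by_contra! hu
  have hyz : ¬ lt y z := fun hyz =>
    hu.not_ge (Set.ncard_le_ncard fun x hx => h.trans y z x hyz hx)
  have hzy : ¬ lt z y := fun hzy =>
    hd.not_ge (Set.ncard_le_ncard fun x hx => h.trans x z y hx hzy)
  obtain ⟨a, haz, hay⟩ := Set.exists_mem_notMem_of_ncard_lt_ncard hd
  obtain ⟨b, hzb, hyb⟩ := Set.exists_mem_notMem_of_ncard_lt_ncard hu
  simp only [Set.mem_ofPred_eq] at haz hay hzb hyb
  have := h.trans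
  exact h.no_three_one ⟨a, z, b, y, haz, hzb, by unfold Incomp; grind,
    by unfold Incomp; grind, by unfold Incomp; grind⟩

theorem IsUIO.down_subset_of_betaVal_le (h : IsUIO lt) {x y : Fin n}
    (hβ : betaVal lt x ≤ betaVal lt y) : {a | lt a x} ⊆ {a | lt a y} := by
  by_contra hxy
  have hlt : {a | lt a y}.ncard < {a | lt a x}.ncard :=
    Set.ncard_lt_ncard ⟨(h.down_total x y).resolve_left hxy, hxy⟩
  have := h.ncard_up_le_of_ncard_down_lt hlt
  rw [betaVal_eq_ncard_sub_ncard h.irrefl, betaVal_eq_ncard_sub_ncard h.irrefl] at hβ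
  omega

theorem IsUIO.up_subset_of_betaVal_le (h : IsUIO lt) {x y : Fin n}
    (hβ : betaVal lt x ≤ betaVal lt y) : {a | lt y a} ⊆ {a | lt x a} :=
  h.flip.down_subset_of_betaVal_le (by rw [betaVal_flip, betaVal_flip]; omega)

end UnitIntervalOrder

section Sorting

variable {n : ℕ} {lt : Fin n → Fin n → Prop} {g : Set (Fin n)}

theorem ncard_setOf_eq_card_filter (P : Fin n → Prop) [DecidablePred P] :
    {k | P k}.ncard = (Finset.univ.filter P).card := by
  rw [Set.ncard_eq_toFinset_card', Set.toFinset_ofPred]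

open Classical in
noncomputable def bcKey (lt : Fin n → Fin n → Prop) (g : Set (Fin n)) (x : Fin n) : ℤ :=
  2 * betaVal lt x + if x ∈ g then 0 else 1

noncomputable def bcSort (lt : Fin n → Fin n → Prop) (g : Set (Fin n)) : Equiv.Perm (Fin n) :=
  Tuple.sort (bcKey lt g)

theorem bcKey_bcSort_mono {i j : Fin n} (hij : i ≤ j) :
    bcKey lt g (bcSort lt g i) ≤ bcKey lt g (bcSort lt g j) :=
  Tuple.monotone_sort (bcKey lt g) hij

theorem betaVal_bcSort_mono {i j : Fin n} (hij : i ≤ j) :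
    betaVal lt (bcSort lt g i) ≤ betaVal lt (bcSort lt g j) := by
  have := bcKey_bcSort_mono (lt := lt) (g := g) hij
  unfold bcKey at this
  split_ifs at this <;> omega

theorem IsUIO.lt_bcSort_of_le (h : IsUIO lt) {i a b : Fin n}
    (hia : lt (bcSort lt g i) (bcSort lt g a)) (hab : a ≤ b) : lt (bcSort lt g i) (bcSort lt g b) :=
  h.down_subset_of_betaVal_le (betaVal_bcSort_mono hab) hia

theorem IsUIO.ncard_up_bcSort_anti (h : IsUIO lt) {i j : Fin n} (hij : i ≤ j) :
    {z | lt (bcSort lt g j) z}.ncard ≤ {z | lt (bcSort lt g i) z}.ncard :=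
  Set.ncard_le_ncard (h.up_subset_of_betaVal_le (betaVal_bcSort_mono hij))

theorem IsBCUIO.mem_of_bcSort_le (h : IsBCUIO n lt g) {i j : Fin n} (hij : i ≤ j)
    (hj : bcSort lt g j ∈ g) : bcSort lt g i ∈ g := by
  by_contra hi
  have hkey := bcKey_bcSort_mono (lt := lt) (g := g) hij
  have hβ := h.2.2.2.2.2 _ hj _ hi
  unfold bcKey at hkey
  rw [if_neg hi, if_pos hj] at hkey
  omega

theorem IsUIO.lt_bcSort_iff (h : IsUIO lt) (i j : Fin n) :
    lt (bcSort lt g i) (bcSort lt g j) ↔ n - {z | lt (bcSort lt g i) z}.ncard ≤ (j : ℕ) := by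
  classical
  set σ := bcSort lt g
  have hcard : (Finset.univ.filter fun k => ¬ lt (σ i) (σ k)).card
      = n - {z | lt (σ i) z}.ncard := by
    have hc := Set.ncard_compl_add_ncard {z | lt (σ i) z}
    rw [Nat.card_fin] at hc
    rw [← ncard_setOf_eq_card_filter,
      show {k | ¬ lt (σ i) (σ k)} = σ ⁻¹' {z | lt (σ i) z}ᶜ from rfl, σ.ncard_preimage]
    omega
  have := Fin.lt_card_filter_univ_iff_apply_of_imp (j := j) (fun k => ¬ lt (σ i) (σ k))
    fun a b hba hna hnb => hna (h.lt_bcSort_of_le hnb hba)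
  rw [hcard] at this
  rw [← not_lt, this, not_not]

theorem IsBCUIO.mem_bcSort_iff (h : IsBCUIO n lt g) (i : Fin n) :
    bcSort lt g i ∈ g ↔ (i : ℕ) < g.ncard := by
  classical
  have := Fin.lt_card_filter_univ_iff_apply_of_imp (j := i) (fun k => bcSort lt g k ∈ g)
    fun a b hba hb => h.mem_of_bcSort_le hba hb
  rwa [← ncard_setOf_eq_card_filter, show {k | bcSort lt g k ∈ g} = bcSort lt g ⁻¹' g from rfl,
    Equiv.ncard_preimage, iff_comm] at this

end Sorting

section Representation

variable {n : ℕ} {lt : Fin n → Fin n → Prop} {g : Set (Fin n)}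

noncomputable def bcUpCount (lt : Fin n → Fin n → Prop) (g : Set (Fin n)) (k : ℕ) : ℕ :=
  if hk : k < n then {z | lt (bcSort lt g ⟨k, hk⟩) z}.ncard else 0

noncomputable def bcSeq (lt : Fin n → Fin n → Prop) (g : Set (Fin n)) (j : ℤ) : ℤ :=
  if j ≤ 0 then g.ncard else n - bcUpCount lt g (j - 1).toNat

theorem bcSeq_succ (i : Fin n) :
    bcSeq lt g ((i : ℕ) + 1) = n - {z | lt (bcSort lt g i) z}.ncard := by
  simp [bcSeq, bcUpCount]

theorem IsUIO.bcUpCount_anti (h : IsUIO lt) : Antitone (bcUpCount lt g) := by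
  intro k l hkl
  unfold bcUpCount
  split_ifs with hl hk
  · exact h.ncard_up_bcSort_anti (Fin.mk_le_mk.2 hkl)
  · omega
  · exact Nat.zero_le _
  · exact le_rfl

theorem IsBCUIO.bcUpCount_add_ncard_le (h : IsBCUIO n lt g) (k : ℕ) :
    bcUpCount lt g k + g.ncard ≤ n := by
  have hg := Set.ncard_compl_add_ncard g
  rw [Nat.card_fin] at hg
  unfold bcUpCount
  split_ifs with hk
  · have : {z | lt (bcSort lt g ⟨k, hk⟩) z} ⊆ gᶜ := fun z hz hzg => h.2.2.2.2.1 z hzg _ hz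
    have := Set.ncard_le_ncard this
    omega
  · omega

theorem IsBCUIO.isThresholdSeq_bcSeq (h : IsBCUIO n lt g) :
    IsThresholdSeq n g.ncard (bcSeq lt g) where
  mono a b hab := by
    have hanti := h.isUIO.bcUpCount_anti (g := g) (Int.toNat_le_toNat (by omega : a - 1 ≤ b - 1))
    have := h.bcUpCount_add_ncard_le (a - 1).toNat
    unfold bcSeq
    split_ifs <;> omega
  map_zero := by simp [bcSeq]
  map_n_le := by
    have := h.bcUpCount_add_ncard_le 0
    unfold bcSeq
    split_ifs <;> omega
  self_le j hj1 hjn := by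
    obtain ⟨k, rfl⟩ : ∃ k : ℕ, j = k + 1 := ⟨(j - 1).toNat, by omega⟩
    have hirr := (h.isUIO.lt_bcSort_iff (g := g) ⟨k, by omega⟩ ⟨k, by omega⟩).not.1
      (h.1 _)
    rw [bcSeq_succ ⟨k, by omega⟩]
    simp only at hirr
    omega

theorem IsBCUIO.bcIso_bcSeq (h : IsBCUIO n lt g) :
    BCIso n (ThresholdLT (bcSeq lt g)) lt (groundedSet g.ncard) g := by
  refine ⟨bcSort lt g, fun i j => ?_, fun i => ?_⟩
  · rw [h.isUIO.lt_bcSort_iff, ThresholdLT, bcSeq_succ]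
    omega
  · rw [h.mem_bcSort_iff, groundedSet, Set.mem_ofPred_eq]
    omega

end Representation

namespace IsBn

variable {n : ℕ} {v w : Equiv.Perm ℤ}

theorem map_zero (hw : IsBn n w) : w 0 = 0 := by
  have := hw.1 0
  rw [neg_zero] at this
  omega

theorem ne_zero (hw : IsBn n w) {i : ℤ} (hi : i ≠ 0) : w i ≠ 0 :=
  fun h => hi (w.injective (h.trans hw.map_zero.symm))

theorem abs_le (hw : IsBn n w) {i : ℤ} (hi : |i| ≤ n) : |w i| ≤ n := by
  by_contra! h
  have := w.injective (hw.2 _ h)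
  rw [this] at h
  omega

theorem eq_of_abs_eq (hw : IsBn n w) {i j : ℤ} (hi : 0 < i) (hj : 0 < j) (h : |w i| = |w j|) :
    i = j := by
  rcases abs_eq_abs.1 h with h | h
  · exact w.injective h
  · have := w.injective (h.trans (hw.1 j).symm)
    omega

theorem exists_eq_or_eq_neg (hw : IsBn n w) {u : ℤ} (hu : 1 ≤ u) (hun : u ≤ n) :
    ∃ i : ℤ, 1 ≤ i ∧ i ≤ n ∧ (w i = u ∨ w i = -u) := by
  set i := w.symm u
  have hwi : w i = u := w.apply_symm_apply u
  have hin : |i| ≤ n := by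
    by_contra! h
    rw [(hw.2 i h).symm.trans hwi, abs_of_pos (by omega)] at h
    omega
  have hi0 : i ≠ 0 := fun h => by rw [h, hw.map_zero] at hwi; omega
  rcases lt_or_gt_of_ne hi0 with hneg | hpos
  · exact ⟨-i, by omega, by rw [abs_of_neg hneg] at hin; omega, Or.inr (by rw [hw.1, hwi])⟩
  · exact ⟨i, hpos, by rw [abs_of_pos hpos] at hin; exact hin, Or.inl hwi⟩

theorem ext (hv : IsBn n v) (hw : IsBn n w) (h : ∀ i : ℤ, 1 ≤ i → i ≤ n → v i = w i) : v = w := by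
  ext i
  rcases lt_trichotomy i 0 with hi | rfl | hi
  · by_cases hin : -i ≤ n
    · rw [← neg_neg i, hv.1, hw.1, h (-i) (by omega) hin]
    · rw [hv.2 i (by rw [abs_of_neg hi]; omega), hw.2 i (by rw [abs_of_neg hi]; omega)]
  · rw [hv.map_zero, hw.map_zero]
  · by_cases hin : i ≤ n
    · exact h i hi hin
    · rw [hv.2 i (by rw [abs_of_pos hi]; omega), hw.2 i (by rw [abs_of_pos hi]; omega)]

end IsBn

theorem negCount_le (n : ℕ) (w : Equiv.Perm ℤ) : negCount n w ≤ n := by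
  have := Finset.card_filter_le (Finset.Icc (1 : ℤ) n) (fun i => w i < 0)
  rw [Int.card_Icc] at this
  unfold negCount
  omega

namespace AvoidsFive

variable {n : ℕ} {w : Equiv.Perm ℤ}

theorem neg_lt_of_pos (ha : AvoidsFive n w) (hw : IsBn n w) {i j : ℤ} (hi : 1 ≤ i)
    (hin : i ≤ n) (hj : 1 ≤ j) (hjn : j ≤ n) (hpos : 0 < w i) (hneg : w j < 0) :
    -w j < w i := by
  have hne : w i ≠ -w j := fun h => by
    have := w.injective (h.trans (hw.1 j).symm)
    omega
  rcases lt_trichotomy i j with hij | rfl | hij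
  · by_contra! h
    exact ha.1 ⟨i, j, hi, hij, hjn, hpos, hneg, lt_of_le_of_ne h hne⟩
  · omega
  · by_contra! h
    exact ha.2.1 ⟨j, i, hj, hij, hin, hneg, hpos, lt_of_le_of_ne h hne⟩

theorem negCount_lt_of_pos (ha : AvoidsFive n w) (hw : IsBn n w) {i : ℤ} (hi : 1 ≤ i)
    (hin : i ≤ n) (hpos : 0 < w i) : (negCount n w : ℤ) < w i := by
  have := Finset.card_le_card_of_injOn (fun j => -w j)
    (s := (Finset.Icc (1 : ℤ) n).filter (fun j => w j < 0))
    (t := Finset.Icc 1 (w i - 1)) (fun j hj => by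
      simp only [Finset.coe_filter, Finset.mem_Icc, Set.mem_ofPred_eq, Finset.coe_Icc,
        Set.mem_Icc] at hj ⊢
      have := ha.neg_lt_of_pos hw hi hin hj.1.1 hj.1.2 hpos hj.2
      omega)
    (fun a _ b _ hab => w.injective (neg_injective hab))
  rw [Int.card_Icc] at this
  unfold negCount
  omega

theorem neg_le_negCount (ha : AvoidsFive n w) (hw : IsBn n w) {j : ℤ} (hj : 1 ≤ j)
    (hjn : j ≤ n) (hneg : w j < 0) : -w j ≤ negCount n w := by
  have hsub : Finset.Icc 1 (-w j) ⊆
      ((Finset.Icc (1 : ℤ) n).filter (fun i => w i < 0)).image (fun i => -w i) := by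
    intro u hu
    rw [Finset.mem_Icc] at hu
    have := hw.abs_le (i := j) (by rw [abs_of_pos (by omega)]; exact hjn)
    rw [abs_of_neg hneg] at this
    obtain ⟨i, hi, hin, hwi | hwi⟩ := hw.exists_eq_or_eq_neg hu.1 (by omega)
    · have := ha.neg_lt_of_pos hw hi hin hj hjn (by omega) hneg
      omega
    · simp only [Finset.mem_image, Finset.mem_filter, Finset.mem_Icc]
      exact ⟨i, ⟨⟨hi, hin⟩, by omega⟩, by omega⟩
  have := (Finset.card_le_card hsub).trans Finset.card_image_le
  rw [Int.card_Icc] at this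
  unfold negCount
  omega

theorem exists_eq_of_negCount_lt (ha : AvoidsFive n w) (hw : IsBn n w) {u : ℤ}
    (hu : (negCount n w : ℤ) < u) (hun : u ≤ n) : ∃ i : ℤ, 1 ≤ i ∧ i ≤ n ∧ w i = u := by
  obtain ⟨i, hi, hin, hwi | hwi⟩ := hw.exists_eq_or_eq_neg (by omega) hun
  · exact ⟨i, hi, hin, hwi⟩
  · have := ha.neg_le_negCount hw hi hin (by omega)
    omega

theorem exists_eq_neg_of_le_negCount (ha : AvoidsFive n w) (hw : IsBn n w) {u : ℤ}
    (hu : 1 ≤ u) (hup : u ≤ negCount n w) : ∃ i : ℤ, 1 ≤ i ∧ i ≤ n ∧ w i = -u := by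
  have := negCount_le n w
  obtain ⟨i, hi, hin, hwi | hwi⟩ := hw.exists_eq_or_eq_neg hu (by omega)
  · have := ha.negCount_lt_of_pos hw hi hin (by omega)
    omega
  · exact ⟨i, hi, hin, hwi⟩

/-- The negative letters of the window are `-1, -2, …, -p`, in this order. -/
theorem filter_neg_image_Icc (ha : AvoidsFive n w) (hw : IsBn n w) {j : ℤ} (hj : 1 ≤ j)
    (hjn : j ≤ n) (hneg : w j < 0) :
    ((Finset.Icc 1 (j - 1)).image w).filter (· < 0) = Finset.Icc (w j + 1) (-1) := by
  ext u
  simp only [Finset.mem_filter, Finset.mem_image, Finset.mem_Icc]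
  constructor
  · rintro ⟨⟨i, ⟨hi, hij⟩, rfl⟩, hu⟩
    have hne : w i ≠ w j := fun h => by have := w.injective h; omega
    have : ¬ w i < w j := fun h => ha.2.2.1 ⟨i, j, hi, by omega, hjn, h, hneg⟩
    omega
  · rintro ⟨hu1, hu2⟩
    have := ha.neg_le_negCount hw hj hjn hneg
    obtain ⟨i, hi, hin, hwi⟩ := ha.exists_eq_neg_of_le_negCount hw (u := -u) (by omega) (by omega)
    have hij : i < j := by
      by_contra! hji
      have hne : i ≠ j := fun h => by rw [h] at hwi; omega
      exact ha.2.2.1 ⟨j, i, hj, lt_of_le_of_ne hji (Ne.symm hne), hin, by omega, by omega⟩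
    exact ⟨⟨i, ⟨hi, by omega⟩, by omega⟩, by omega⟩

end AvoidsFive

section Mval

variable {n : ℕ} {w : Equiv.Perm ℤ}

theorem mval_le_iff {j c : ℤ} :
    mval n w j ≤ c ↔ (negCount n w : ℤ) ≤ c ∧ ∀ i, 1 ≤ i → i ≤ j → w i ≤ c := by
  simp only [mval, Finset.max'_le_iff, Finset.forall_mem_insert, Finset.forall_mem_image,
    Finset.mem_Icc, and_imp]

theorem negCount_le_mval (j : ℤ) : (negCount n w : ℤ) ≤ mval n w j :=
  (mval_le_iff.1 le_rfl).1

theorem le_mval {i j : ℤ} (hi : 1 ≤ i) (hij : i ≤ j) : w i ≤ mval n w j :=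
  (mval_le_iff.1 le_rfl).2 i hi hij

theorem mval_mono : Monotone (mval n w) := fun _ b hab =>
  mval_le_iff.2 ⟨negCount_le_mval b, fun _ hi hia => le_mval hi (hia.trans hab)⟩

theorem mval_zero : mval n w 0 = negCount n w :=
  le_antisymm (mval_le_iff.2 ⟨le_rfl, fun i hi h0 => by omega⟩) (negCount_le_mval 0)

theorem exists_eq_mval {j : ℤ} (h : (negCount n w : ℤ) < mval n w j) :
    ∃ i, 1 ≤ i ∧ i ≤ j ∧ w i = mval n w j := by
  have := Finset.max'_mem (insert (negCount n w : ℤ) ((Finset.Icc 1 j).image w))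
    (Finset.insert_nonempty _ _)
  rw [← mval, Finset.mem_insert, Finset.mem_image] at this
  rcases this with h' | ⟨i, hi, hwi⟩
  · omega
  · exact ⟨i, (Finset.mem_Icc.1 hi).1, (Finset.mem_Icc.1 hi).2, hwi⟩

theorem eq_mval_of_lt {j : ℤ} (hj : 1 ≤ j) (h : mval n w (j - 1) < mval n w j) :
    w j = mval n w j := by
  have := negCount_le_mval (n := n) (w := w) (j - 1)
  obtain ⟨i, hi, hij, hwi⟩ := exists_eq_mval (by omega : (negCount n w : ℤ) < mval n w j)
  rcases hij.lt_or_eq with hij | rfl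
  · have := le_mval (n := n) (w := w) hi (by omega : i ≤ j - 1)
    omega
  · exact hwi

theorem IsBn.mval_le (hw : IsBn n w) {j : ℤ} (hj : j ≤ n) : mval n w j ≤ n :=
  mval_le_iff.2 ⟨by exact_mod_cast negCount_le n w, fun i hi hij =>
    (le_abs_self _).trans (hw.abs_le (by rw [abs_of_pos (by omega)]; omega))⟩

theorem AvoidsFive.self_le_mval (ha : AvoidsFive n w) (hw : IsBn n w) {j : ℤ} (hj : 1 ≤ j)
    (hjn : j ≤ n) : j ≤ mval n w j := by
  have := Finset.card_le_card_of_injOn (fun i => |w i|) (s := Finset.Icc 1 j)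
    (t := Finset.Icc 1 (mval n w j)) (fun i hi => by
      simp only [Finset.coe_Icc, Set.mem_Icc] at hi ⊢
      have hne := hw.ne_zero (i := i) (by omega)
      rcases lt_or_gt_of_ne hne with hneg | hpos
      · have := ha.neg_le_negCount hw hi.1 (by omega) hneg
        have := negCount_le_mval (n := n) (w := w) j
        rw [abs_of_neg hneg]
        omega
      · have := le_mval (n := n) (w := w) hi.1 hi.2
        rw [abs_of_pos hpos]
        omega)
    (fun a ha' b hb' hab => hw.eq_of_abs_eq (by simp at ha'; omega) (by simp at hb'; omega) hab)
  rw [Int.card_Icc, Int.card_Icc] at this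
  omega

theorem AvoidsFive.isThresholdSeq_mval (ha : AvoidsFive n w) (hw : IsBn n w) :
    IsThresholdSeq n (negCount n w) (mval n w) where
  mono := mval_mono
  map_zero := mval_zero
  map_n_le := hw.mval_le le_rfl
  self_le _ hj hjn := ha.self_le_mval hw hj hjn

end Mval

def negCard (S : Finset ℤ) : ℕ :=
  (S.filter (· < 0)).card

noncomputable def greedyStep (p : ℕ) (S : Finset ℤ) (prev cur : ℤ) : ℤ :=
  if prev < cur then cur
  else if h : (Finset.Ioo (p : ℤ) cur \ S).Nonempty then (Finset.Ioo (p : ℤ) cur \ S).max' h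
  else -(negCard S + 1)

noncomputable def greedyUsed (p : ℕ) (M : ℤ → ℤ) : ℕ → Finset ℤ
  | 0 => ∅
  | k + 1 => insert (greedyStep p (greedyUsed p M k) (M k) (M (k + 1))) (greedyUsed p M k)

noncomputable def greedyWin (p : ℕ) (M : ℤ → ℤ) (j : ℤ) : ℤ :=
  greedyStep p (greedyUsed p M (j - 1).toNat) (M (j - 1)) (M j)

section Greedy

variable {n p : ℕ} {M : ℤ → ℤ}

theorem greedyStep_cases (p : ℕ) (S : Finset ℤ) (prev cur : ℤ) :
    (prev < cur ∧ greedyStep p S prev cur = cur) ∨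
    (cur ≤ prev ∧ greedyStep p S prev cur ∈ Finset.Ioo (p : ℤ) cur \ S ∧
      ∀ v ∈ Finset.Ioo (p : ℤ) cur \ S, v ≤ greedyStep p S prev cur) ∨
    (cur ≤ prev ∧ Finset.Ioo (p : ℤ) cur \ S = ∅ ∧ greedyStep p S prev cur = -(negCard S + 1)) := by
  unfold greedyStep
  split_ifs with hlt hne
  · exact Or.inl ⟨hlt, rfl⟩
  · exact Or.inr (Or.inl ⟨not_lt.1 hlt, Finset.max'_mem _ _, fun v hv => Finset.le_max' _ v hv⟩)
  · exact Or.inr (Or.inr ⟨not_lt.1 hlt, Finset.not_nonempty_iff_eq_empty.1 hne, rfl⟩)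

theorem greedyWin_cases (p : ℕ) (M : ℤ → ℤ) (j : ℤ) :
    (M (j - 1) < M j ∧ greedyWin p M j = M j) ∨
    (M j ≤ M (j - 1) ∧ greedyWin p M j ∈ Finset.Ioo (p : ℤ) (M j) \ greedyUsed p M (j - 1).toNat ∧
      ∀ v ∈ Finset.Ioo (p : ℤ) (M j) \ greedyUsed p M (j - 1).toNat, v ≤ greedyWin p M j) ∨
    (M j ≤ M (j - 1) ∧ Finset.Ioo (p : ℤ) (M j) \ greedyUsed p M (j - 1).toNat = ∅ ∧
      greedyWin p M j = -(negCard (greedyUsed p M (j - 1).toNat) + 1)) :=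
  greedyStep_cases _ _ _ _

theorem greedyUsed_succ (k : ℕ) :
    greedyUsed p M (k + 1) = insert (greedyWin p M (k + 1)) (greedyUsed p M k) := by
  simp [greedyUsed, greedyWin]

theorem greedyUsed_eq_image (k : ℕ) :
    greedyUsed p M k = (Finset.Icc 1 (k : ℤ)).image (greedyWin p M) := by
  induction k with
  | zero => rfl
  | succ k ih =>
    rw [greedyUsed_succ, ih, show Finset.Icc (1 : ℤ) ((k + 1 : ℕ) : ℤ) = insert ((k : ℤ) + 1)
      (Finset.Icc 1 (k : ℤ)) by ext; simp only [Finset.mem_insert, Finset.mem_Icc]; omega,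
      Finset.image_insert]

theorem greedyUsed_congr {M' : ℤ → ℤ} {k : ℕ} (h : ∀ j : ℤ, 0 ≤ j → j ≤ k → M j = M' j) :
    greedyUsed p M k = greedyUsed p M' k := by
  induction k with
  | zero => rfl
  | succ k ih =>
    simp only [greedyUsed]
    rw [ih fun j h0 hj => h j h0 (by omega), h k (by omega) (by omega),
      h ((k : ℤ) + 1) (by omega) (by omega)]

theorem greedyWin_congr {M' : ℤ → ℤ} {j : ℤ} (hj : 1 ≤ j)
    (h : ∀ i : ℤ, 0 ≤ i → i ≤ j → M i = M' i) : greedyWin p M j = greedyWin p M' j := by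
  rw [greedyWin, greedyWin, greedyUsed_congr fun i h0 hi => h i h0 (by omega),
    h (j - 1) (by omega) (by omega), h j (by omega) le_rfl]

theorem negCard_insert_of_pos {S : Finset ℤ} {a : ℤ} (ha : 0 < a) :
    negCard (insert a S) = negCard S := by
  rw [negCard, Finset.filter_insert, if_neg (by omega), negCard]

theorem negCard_insert_of_neg {S : Finset ℤ} {a : ℤ} (ha : a < 0) (haS : a ∉ S) :
    negCard (insert a S) = negCard S + 1 := by
  rw [negCard, Finset.filter_insert, if_pos ha, Finset.card_insert_of_notMem
    (fun h => haS (Finset.mem_filter.1 h).1), negCard]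

/-- Invariant of the greedy algorithm after `k` letters: `S` is the set of letters written so
far and `m = M k`. -/
structure GreedyInv (p : ℕ) (m : ℤ) (S : Finset ℤ) (k : ℕ) : Prop where
  card_eq : S.card = k
  mem : ∀ v ∈ S, ((p : ℤ) < v ∧ v ≤ m) ∨ (-(negCard S : ℤ) ≤ v ∧ v < 0)
  negCard_le : negCard S ≤ p
  top_mem : (p : ℤ) < m → m ∈ S

namespace GreedyInv

variable {m m' a : ℤ} {S : Finset ℤ} {k : ℕ}

theorem empty : GreedyInv p p ∅ 0 where
  card_eq := rfl
  mem := by simp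
  negCard_le := Nat.zero_le _
  top_mem := by omega

theorem insert_pos (hI : GreedyInv p m S k) (hmm' : m ≤ m') (ha : (p : ℤ) < a) (ham' : a ≤ m')
    (haS : a ∉ S) (htop : (p : ℤ) < m' → m' ∈ insert a S) :
    GreedyInv p m' (insert a S) (k + 1) where
  card_eq := by rw [Finset.card_insert_of_notMem haS, hI.card_eq]
  mem v hv := by
    rw [negCard_insert_of_pos (by omega)]
    rcases Finset.mem_insert.1 hv with rfl | hv
    · exact Or.inl ⟨ha, ham'⟩
    · rcases hI.mem v hv with h | h
      · exact Or.inl ⟨h.1, h.2.trans hmm'⟩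
      · exact Or.inr h
  negCard_le := by rw [negCard_insert_of_pos (by omega)]; exact hI.negCard_le
  top_mem := htop

/-- When no value of `(p, m)` is left, the positive letters used so far are exactly `(p, m]`,
so the `k + 1 ≤ m` letters leave room for one more negative letter. -/
theorem insert_neg (hI : GreedyInv p m S k) (hfull : Finset.Ioo (p : ℤ) m \ S = ∅)
    (hk : (k : ℤ) + 1 ≤ m) : GreedyInv p m (insert (-((negCard S : ℤ) + 1)) S) (k + 1) := by
  have hnotMem : -((negCard S : ℤ) + 1) ∉ S := fun h => by
    rcases hI.mem _ h with h | h <;> omega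
  have hpos : S.filter (0 < ·) = Finset.Ioc (p : ℤ) m := by
    ext v
    simp only [Finset.mem_filter, Finset.mem_Ioc]
    constructor
    · rintro ⟨hv, hv0⟩
      rcases hI.mem v hv with h | h <;> omega
    · rintro ⟨hpv, hvm⟩
      refine ⟨?_, by omega⟩
      rcases hvm.lt_or_eq with hvm | rfl
      · by_contra hvS
        exact Finset.notMem_empty v (hfull ▸ Finset.mem_sdiff.2 ⟨Finset.mem_Ioo.2 ⟨hpv, hvm⟩, hvS⟩)
      · exact hI.top_mem hpv
  have hsplit := Finset.card_filter_add_card_filter_not (s := S) (p := (0 < ·))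
  have hneg : S.filter (fun v => ¬ 0 < v) = S.filter (· < 0) :=
    Finset.filter_congr fun v hv => by rcases hI.mem v hv with h | h <;> omega
  rw [hpos, hneg, Int.card_Ioc, hI.card_eq] at hsplit
  have hp := hI.negCard_le
  refine ⟨?_, fun v hv => ?_, ?_, fun h => Finset.mem_insert_of_mem (hI.top_mem h)⟩
  · rw [Finset.card_insert_of_notMem hnotMem, hI.card_eq]
  · rw [negCard_insert_of_neg (by omega) hnotMem]
    rcases Finset.mem_insert.1 hv with rfl | hv
    · right; push_cast; omega
    · rcases hI.mem v hv with h | h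
      · exact Or.inl h
      · right; push_cast; omega
  · rw [negCard_insert_of_neg (by omega) hnotMem, negCard]
    omega

theorem step (hI : GreedyInv p m S k) (hpm : (p : ℤ) ≤ m) (hmm' : m ≤ m')
    (hk : (k : ℤ) + 1 ≤ m') : GreedyInv p m' (insert (greedyStep p S m m') S) (k + 1) := by
  rcases greedyStep_cases p S m m' with ⟨hlt, hs⟩ | ⟨hle, hmem, -⟩ | ⟨hle, hfull, hs⟩
  · rw [hs]
    refine hI.insert_pos hmm' (by omega) le_rfl (fun h => ?_) fun _ => Finset.mem_insert_self _ _
    rcases hI.mem m' h with h | h <;> omega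
  · obtain ⟨hav, haS⟩ := Finset.mem_sdiff.1 hmem
    rw [Finset.mem_Ioo] at hav
    have hm : m' = m := le_antisymm hle hmm'
    subst hm
    exact hI.insert_pos le_rfl hav.1 hav.2.le haS fun h => Finset.mem_insert_of_mem (hI.top_mem h)
  · have hm : m' = m := le_antisymm hle hmm'
    subst hm
    rw [hs]
    exact hI.insert_neg hfull hk

end GreedyInv

theorem IsThresholdSeq.greedyInv (hM : IsThresholdSeq n p M) :
    ∀ k : ℕ, k ≤ n → GreedyInv p (M k) (greedyUsed p M k) k
  | 0, _ => hM.map_zero ▸ GreedyInv.empty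
  | k + 1, hk => by
    have := (hM.greedyInv k (by omega)).step (hM.p_le k (by omega)) (hM.mono (by omega))
      (hM.self_le (k + 1 : ℕ) (by omega) (by omega))
    simpa [greedyUsed] using this

end Greedy

def signedExtend (n : ℕ) (x : ℤ → ℤ) (i : ℤ) : ℤ :=
  if |i| ≤ n then i.sign * x |i| else i

section SignedExtend

variable {n : ℕ} {x : ℤ → ℤ}

theorem signedExtend_neg (i : ℤ) : signedExtend n x (-i) = -signedExtend n x i := by
  simp only [signedExtend, abs_neg, Int.sign_neg]
  split_ifs <;> ring

theorem signedExtend_of_pos {i : ℤ} (hi : 0 < i) (hin : i ≤ n) : signedExtend n x i = x i := by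
  rw [signedExtend, abs_of_pos hi, if_pos hin, Int.sign_eq_one_iff_pos.2 hi, one_mul]

theorem abs_signedExtend {i : ℤ} (hi : |i| ≤ n) (hi0 : i ≠ 0) :
    |signedExtend n x i| = |x (|i|)| := by
  rw [signedExtend, if_pos hi, abs_mul, Int.abs_sign_of_ne_zero hi0, one_mul]

variable (hx : ∀ i : ℤ, 1 ≤ i → i ≤ n → 1 ≤ |x i| ∧ |x i| ≤ n)
include hx

theorem abs_signedExtend_le {i : ℤ} (hi : |i| ≤ n) : |signedExtend n x i| ≤ n := by
  rcases eq_or_ne i 0 with rfl | hi0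
  · simp [signedExtend]
  · rw [abs_signedExtend hi hi0]
    exact (hx _ (Int.one_le_abs hi0) hi).2

theorem signedExtend_ne_zero {i : ℤ} (hi : |i| ≤ n) (hi0 : i ≠ 0) : signedExtend n x i ≠ 0 := by
  rw [← abs_pos, abs_signedExtend hi hi0]
  exact (hx _ (Int.one_le_abs hi0) hi).1

theorem signedExtend_injective
    (hinj : ∀ i j : ℤ, 1 ≤ i → i ≤ n → 1 ≤ j → j ≤ n → |x i| = |x j| → i = j) :
    Function.Injective (signedExtend n x) := by
  intro a b hab
  by_cases ha : |a| ≤ n <;> by_cases hb : |b| ≤ n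
  · rcases eq_or_ne a 0 with rfl | ha0
    · by_contra hb0
      exact signedExtend_ne_zero hx hb (Ne.symm hb0) (hab.symm.trans (by simp [signedExtend]))
    rcases eq_or_ne b 0 with rfl | hb0
    · exact absurd (hab.trans (by simp [signedExtend])) (signedExtend_ne_zero hx ha ha0)
    have habs : |a| = |b| := hinj _ _ (Int.one_le_abs ha0) ha (Int.one_le_abs hb0) hb
      (by rw [← abs_signedExtend ha ha0, ← abs_signedExtend hb hb0, hab])
    rcases abs_eq_abs.1 habs with h | rfl
    · exact h
    · rw [signedExtend_neg] at hab
      exact absurd (by linarith : signedExtend n x b = 0) (signedExtend_ne_zero hx hb hb0)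
  · have := abs_signedExtend_le hx ha
    rw [hab, signedExtend, if_neg hb] at this
    omega
  · have := abs_signedExtend_le hx hb
    rw [← hab, signedExtend, if_neg ha] at this
    omega
  · rwa [signedExtend, signedExtend, if_neg ha, if_neg hb] at hab

end SignedExtend

theorem exists_isBn_of_window {n : ℕ} (x : ℤ → ℤ)
    (hx : ∀ i : ℤ, 1 ≤ i → i ≤ n → 1 ≤ |x i| ∧ |x i| ≤ n)
    (hinj : ∀ i j : ℤ, 1 ≤ i → i ≤ n → 1 ≤ j → j ≤ n → |x i| = |x j| → i = j) :
    ∃ w : Equiv.Perm ℤ, IsBn n w ∧ ∀ i : ℤ, 1 ≤ i → i ≤ n → w i = x i := by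
  have hinj' := signedExtend_injective hx hinj
  have hsurjOn := Finset.surjOn_of_injOn_of_card_le (signedExtend n x)
    (s := Finset.Icc (-(n : ℤ)) n) (t := Finset.Icc (-(n : ℤ)) n)
    (fun a ha => by
      simp only [Finset.coe_Icc, Set.mem_Icc, ← abs_le] at ha ⊢
      exact abs_signedExtend_le hx ha)
    (fun a _ b _ hab => hinj' hab) le_rfl
  have hsurj : Function.Surjective (signedExtend n x) := fun y => by
    by_cases hy : |y| ≤ n
    · obtain ⟨a, -, ha⟩ := hsurjOn (by simpa [abs_le] using hy)
      exact ⟨a, ha⟩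
    · exact ⟨y, by rw [signedExtend, if_neg hy]⟩
  refine ⟨Equiv.ofBijective _ ⟨hinj', hsurj⟩, ⟨signedExtend_neg, fun i hi => ?_⟩,
    fun i hi hin => signedExtend_of_pos (by omega) hin⟩
  exact if_neg (not_le.2 hi)

namespace IsThresholdSeq

variable {n p : ℕ} {M : ℤ → ℤ} {w : Equiv.Perm ℤ}

theorem greedyWin_injOn (hM : IsThresholdSeq n p M) {i j : ℤ} (hi : 1 ≤ i) (hin : i ≤ n)
    (hj : 1 ≤ j) (hjn : j ≤ n) (h : greedyWin p M i = greedyWin p M j) : i = j := by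
  have hcard := (hM.greedyInv n le_rfl).card_eq
  have hIcc : (Finset.Icc (1 : ℤ) n).card = n := by simp
  rw [greedyUsed_eq_image] at hcard
  exact Finset.card_image_iff.1 (hcard.trans hIcc.symm) (by simp; omega) (by simp; omega) h

theorem greedyWin_mem_greedyUsed {i j : ℤ} (hi : 1 ≤ i) (hij : i < j) :
    greedyWin p M i ∈ greedyUsed p M (j - 1).toNat := by
  rw [greedyUsed_eq_image]
  exact Finset.mem_image_of_mem _ (by simp; omega)

theorem greedyWin_notMem (hM : IsThresholdSeq n p M) {j k : ℤ} (hj : 1 ≤ j) (hjk : j ≤ k)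
    (hkn : k ≤ n) : greedyWin p M k ∉ greedyUsed p M (j - 1).toNat := by
  rw [greedyUsed_eq_image, Finset.mem_image]
  rintro ⟨i, hi, h⟩
  rw [Finset.mem_Icc] at hi
  have := hM.greedyWin_injOn hi.1 (by omega) (by omega) hkn h
  omega

theorem greedyWin_bounds (hM : IsThresholdSeq n p M) {j : ℤ} (hj : 1 ≤ j) (hjn : j ≤ n) :
    ((p : ℤ) < greedyWin p M j ∧ greedyWin p M j ≤ M j) ∨
      (-(p : ℤ) ≤ greedyWin p M j ∧ greedyWin p M j < 0) := by
  have hI := hM.greedyInv j.toNat (by omega)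
  have hmem : greedyWin p M j ∈ greedyUsed p M j.toNat := by
    rw [greedyUsed_eq_image]
    exact Finset.mem_image_of_mem _ (by simp; omega)
  have := hI.negCard_le
  rw [show ((j.toNat : ℕ) : ℤ) = j by omega] at hI
  rcases hI.mem _ hmem with h | h <;> omega

theorem greedyWin_of_neg (hM : IsThresholdSeq n p M) {j : ℤ} (hj : 1 ≤ j)
    (hneg : greedyWin p M j < 0) :
    Finset.Ioo (p : ℤ) (M j) \ greedyUsed p M (j - 1).toNat = ∅ ∧
      greedyWin p M j = -((negCard (greedyUsed p M (j - 1).toNat) : ℤ) + 1) := by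
  have := hM.p_le (j - 1) (by omega)
  rcases greedyWin_cases p M j with ⟨hlt, hs⟩ | ⟨-, hmem, -⟩ | ⟨-, hfull, hs⟩
  · omega
  · have := (Finset.mem_Ioo.1 (Finset.mem_sdiff.1 hmem).1).1
    omega
  · exact ⟨hfull, hs⟩

theorem negCard_greedyUsed (hM : IsThresholdSeq n p M) : negCard (greedyUsed p M n) = p := by
  have hI := hM.greedyInv n le_rfl
  have hpos : (greedyUsed p M n).filter (0 < ·) ⊆ Finset.Ioc (p : ℤ) n := fun v hv => by
    rw [Finset.mem_filter] at hv
    have := hM.map_n_le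
    rw [Finset.mem_Ioc]
    rcases hI.mem v hv.1 with h | h <;> omega
  have hsplit := Finset.card_filter_add_card_filter_not (s := greedyUsed p M n) (p := (0 < ·))
  have hneg : (greedyUsed p M n).filter (fun v => ¬ 0 < v) = (greedyUsed p M n).filter (· < 0) :=
    Finset.filter_congr fun v hv => by rcases hI.mem v hv with h | h <;> omega
  have := Finset.card_le_card hpos
  rw [Int.card_Ioc] at this
  rw [hneg, hI.card_eq] at hsplit
  have := hI.negCard_le
  have := hM.p_le_n
  unfold negCard at *
  omega

section Window

variable (hwin : ∀ i : ℤ, 1 ≤ i → i ≤ n → w i = greedyWin p M i)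
include hwin

theorem negCount_of_window (hM : IsThresholdSeq n p M) : negCount n w = p := by
  rw [← hM.negCard_greedyUsed, negCount, negCard, greedyUsed_eq_image, Finset.filter_image,
    Finset.card_image_of_injOn fun i hi j hj h => hM.greedyWin_injOn (by simp_all) (by simp_all)
      (by simp_all) (by simp_all) h]
  congr 1
  exact Finset.filter_congr fun i hi => by
    rw [Finset.mem_Icc] at hi
    rw [hwin i hi.1 hi.2]

theorem mval_of_window (hM : IsThresholdSeq n p M) {j : ℤ} (hj : 1 ≤ j) (hjn : j ≤ n) :
    mval n w j = M j := by
  have hpM := hM.p_le j (by omega)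
  refine le_antisymm (mval_le_iff.2 ⟨hM.negCount_of_window hwin ▸ hpM, fun i hi hij => ?_⟩) ?_
  · have := hM.mono hij
    rw [hwin i hi (by omega)]
    rcases hM.greedyWin_bounds hi (by omega) with h | h <;> omega
  · rcases hpM.lt_or_eq with hlt | heq
    · have hmem := (hM.greedyInv j.toNat (by omega)).top_mem
      rw [show ((j.toNat : ℕ) : ℤ) = j by omega, greedyUsed_eq_image, Finset.mem_image] at hmem
      obtain ⟨i, hi, hwi⟩ := hmem hlt
      rw [Finset.mem_Icc] at hi
      rw [← hwi, ← hwin i hi.1 (by omega)]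
      exact le_mval hi.1 (by omega)
    · rw [← heq, ← hM.negCount_of_window hwin]
      exact negCount_le_mval j

theorem window_bounds (hM : IsThresholdSeq n p M) {i : ℤ} (hi : 1 ≤ i) (hin : i ≤ n) :
    ((p : ℤ) < w i ∧ w i ≤ M i) ∨ (-(p : ℤ) ≤ w i ∧ w i < 0) :=
  hwin i hi hin ▸ hM.greedyWin_bounds hi hin

theorem avoids12bar_of_window (hM : IsThresholdSeq n p M) : Avoids12bar n w := by
  rintro ⟨i, j, hi, hij, hjn, hpos, hneg, hlt⟩
  rcases hM.window_bounds hwin hi (by omega) with h | h <;>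
    rcases hM.window_bounds hwin (by omega : 1 ≤ j) hjn with h' | h' <;> omega

theorem avoids2bar1_of_window (hM : IsThresholdSeq n p M) : Avoids2bar1 n w := by
  rintro ⟨i, j, hi, hij, hjn, hneg, hpos, hlt⟩
  rcases hM.window_bounds hwin hi (by omega) with h | h <;>
    rcases hM.window_bounds hwin (by omega : 1 ≤ j) hjn with h' | h' <;> omega

theorem avoids2bar1bar_of_window (hM : IsThresholdSeq n p M) : Avoids2bar1bar n w := by
  rintro ⟨i, j, hi, hij, hjn, hlt, hneg⟩
  rw [hwin i hi (by omega)] at hlt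
  rw [hwin j (by omega) hjn] at hlt hneg
  have hs := (hM.greedyWin_of_neg (by omega) hneg).2
  rcases (hM.greedyInv (j - 1).toNat (by omega)).mem _ (greedyWin_mem_greedyUsed hi hij)
    with h | h <;> omega

theorem avoids312s_of_window (hM : IsThresholdSeq n p M) : Avoids312s n w := by
  rintro ⟨i, j, k, hi, hij, hjk, hkn, hposj, hjk', hki⟩
  have hwi := hM.window_bounds hwin hi (by omega)
  have hwk := hM.window_bounds hwin (by omega : 1 ≤ k) hkn
  have hMi := hM.mono (by omega : i ≤ j - 1)
  have hMj := hM.mono (by omega : j - 1 ≤ j)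
  have hkS := hM.greedyWin_notMem (by omega : 1 ≤ j) hjk.le hkn
  rw [hwin i hi (by omega)] at hki hwi
  rw [hwin j (by omega) (by omega)] at hposj hjk'
  rw [hwin k (by omega) hkn] at hjk' hki hwk
  rcases greedyWin_cases p M j with ⟨-, hs⟩ | ⟨-, -, hmax⟩ | ⟨-, -, hs⟩
  · rcases hwi with h | h <;> omega
  · have := hmax (greedyWin p M k) (Finset.mem_sdiff.2 ⟨Finset.mem_Ioo.2 (by omega), hkS⟩)
    omega
  · omega

theorem avoids31bar2_of_window (hM : IsThresholdSeq n p M) : Avoids31bar2 n w := by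
  rintro ⟨i, j, k, hi, hij, hjk, hkn, hnegj, hposk, hki, -⟩
  have hwi := hM.window_bounds hwin hi (by omega)
  have hwk := hM.window_bounds hwin (by omega : 1 ≤ k) hkn
  have hMi := hM.mono (by omega : i ≤ j)
  have hkS := hM.greedyWin_notMem (by omega : 1 ≤ j) hjk.le hkn
  rw [hwin i hi (by omega)] at hki hwi
  rw [hwin j (by omega) (by omega)] at hnegj
  rw [hwin k (by omega) hkn] at hposk hki hwk
  have hfull := (hM.greedyWin_of_neg (by omega) hnegj).1
  refine Finset.notMem_empty (greedyWin p M k) (hfull ▸ Finset.mem_sdiff.2 ⟨?_, hkS⟩)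
  rw [Finset.mem_Ioo]
  rcases hwi with h | h <;> omega

end Window

theorem exists_window (hM : IsThresholdSeq n p M) :
    ∃ w : Equiv.Perm ℤ, IsBn n w ∧ AvoidsFive n w ∧ negCount n w = p ∧
      ∀ j : ℤ, 1 ≤ j → j ≤ n → mval n w j = M j := by
  have hb := fun (i : ℤ) (hi : 1 ≤ i) (hin : i ≤ n) => hM.greedyWin_bounds hi hin
  have hpn := hM.p_le_n
  obtain ⟨w, hw, hwin⟩ := exists_isBn_of_window (greedyWin p M) (fun i hi hin => by
      have := hM.le_n hin
      rcases hb i hi hin with h | h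
      · rw [abs_of_pos (by omega)]; omega
      · rw [abs_of_neg h.2]; omega)
    (fun i j hi hin hj hjn h => hM.greedyWin_injOn hi hin hj hjn (by
      rcases hb i hi hin with h1 | h1 <;> rcases hb j hj hjn with h2 | h2 <;>
        rcases abs_cases (greedyWin p M i) with h3 | h3 <;>
        rcases abs_cases (greedyWin p M j) with h4 | h4 <;> omega))
  exact ⟨w, hw, ⟨hM.avoids12bar_of_window hwin, hM.avoids2bar1_of_window hwin,
      hM.avoids2bar1bar_of_window hwin, hM.avoids312s_of_window hwin,
      hM.avoids31bar2_of_window hwin⟩, hM.negCount_of_window hwin,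
    fun j hj hjn => hM.mval_of_window hwin hj hjn⟩

end IsThresholdSeq

namespace AvoidsFive

variable {n : ℕ} {w : Equiv.Perm ℤ}

theorem exists_of_mem_avail (ha : AvoidsFive n w) (hw : IsBn n w) {j v : ℤ} (hjn : j ≤ n) (hle : mval n w j ≤ mval n w (j - 1))
    (hv : v ∈ Finset.Ioo (negCount n w : ℤ) (mval n w j) \ (Finset.Icc 1 (j - 1)).image w) :
    (∃ i, 1 ≤ i ∧ i ≤ j - 1 ∧ w i = mval n w j) ∧ ∃ k, j ≤ k ∧ k ≤ n ∧ w k = v := by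
  obtain ⟨hv, hvS⟩ := Finset.mem_sdiff.1 hv
  rw [Finset.mem_Ioo] at hv
  obtain ⟨i, hi, hij, hwi⟩ := exists_eq_mval (n := n) (w := w) (j := j - 1) (by omega)
  obtain ⟨k, hk, hkn, hwk⟩ := ha.exists_eq_of_negCount_lt hw hv.1
    (hv.2.le.trans (hw.mval_le hjn))
  refine ⟨⟨i, hi, hij, by have := mval_mono (n := n) (w := w) (by omega : j - 1 ≤ j); omega⟩,
    k, ?_, hkn, hwk⟩
  by_contra! hkj
  exact hvS (hwk ▸ Finset.mem_image_of_mem w (Finset.mem_Icc.2 ⟨hk, by omega⟩))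

theorem mem_avail_of_pos (ha : AvoidsFive n w) (hw : IsBn n w) {j : ℤ} (hj : 1 ≤ j)
    (hjn : j ≤ n) (hle : mval n w j ≤ mval n w (j - 1)) (hpos : 0 < w j) :
    w j ∈ Finset.Ioo (negCount n w : ℤ) (mval n w j) \ (Finset.Icc 1 (j - 1)).image w := by
  have hp := ha.negCount_lt_of_pos hw hj hjn hpos
  have hwj := le_mval (n := n) (w := w) hj le_rfl
  obtain ⟨i, hi, hij, hwi⟩ := exists_eq_mval (n := n) (w := w) (j := j - 1) (by omega)
  have hne : w j ≠ mval n w j := fun h => by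
    have := mval_mono (n := n) (w := w) (by omega : j - 1 ≤ j)
    have := w.injective (hwi.trans (by omega : mval n w (j - 1) = w j))
    omega
  refine Finset.mem_sdiff.2 ⟨Finset.mem_Ioo.2 ⟨hp, lt_of_le_of_ne hwj hne⟩, fun h => ?_⟩
  obtain ⟨i, hi, hij⟩ := Finset.mem_image.1 h
  have := w.injective hij
  rw [Finset.mem_Icc] at hi
  omega

theorem greedyStep_eq (ha : AvoidsFive n w) (hw : IsBn n w) {j : ℤ} (hj : 1 ≤ j) (hjn : j ≤ n) :
    greedyStep (negCount n w) ((Finset.Icc 1 (j - 1)).image w) (mval n w (j - 1)) (mval n w j)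
      = w j := by
  rcases greedyStep_cases (negCount n w) ((Finset.Icc 1 (j - 1)).image w) (mval n w (j - 1))
    (mval n w j) with ⟨hlt, hs⟩ | ⟨hle, hmem, hmax⟩ | ⟨hle, hfull, hs⟩
  · rw [hs, eq_mval_of_lt hj hlt]
  · obtain ⟨⟨i, hi, hij, hwi⟩, k, hjk, hkn, hwk⟩ := ha.exists_of_mem_avail hw hjn hle hmem
    have hk := Finset.mem_Ioo.1 (Finset.mem_sdiff.1 hmem).1
    have hjk' : w j ≠ w k → j < k := fun h => lt_of_le_of_ne hjk fun hjk => h (hjk ▸ rfl)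
    have hpos : 0 < w j := by
      by_contra! hnonpos
      have hneg : w j < 0 := lt_of_le_of_ne hnonpos (hw.ne_zero (by omega))
      have := ha.neg_le_negCount hw hj hjn hneg
      exact ha.2.2.2.2 ⟨i, j, k, hi, by omega, hjk' (by omega), hkn, hneg, by omega, by omega,
        by omega⟩
    refine le_antisymm ?_ (hmax _ (ha.mem_avail_of_pos hw hj hjn hle hpos))
    by_contra! hgt
    exact ha.2.2.2.1 ⟨i, j, k, hi, by omega, hjk' (by omega), hkn, hpos, by omega, by omega⟩
  · have hneg : w j < 0 := by
      by_contra! hpos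
      exact Finset.notMem_empty _ (hfull ▸ ha.mem_avail_of_pos hw hj hjn hle
        (lt_of_le_of_ne hpos (hw.ne_zero (by omega)).symm))
    have hcard := congrArg Finset.card (ha.filter_neg_image_Icc hw hj hjn hneg)
    rw [Int.card_Icc] at hcard
    rw [hs, negCard, hcard]
    omega

theorem eq_greedyWin (ha : AvoidsFive n w) (hw : IsBn n w) {j : ℤ} (hj : 1 ≤ j) (hjn : j ≤ n) :
    w j = greedyWin (negCount n w) (mval n w) j := by
  obtain ⟨k, rfl⟩ : ∃ k : ℕ, j = k := ⟨j.toNat, by omega⟩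
  induction k using Nat.strong_induction_on with
  | _ k ih =>
    have hprefix : greedyUsed (negCount n w) (mval n w) ((k : ℤ) - 1).toNat
        = (Finset.Icc 1 ((k : ℤ) - 1)).image w := by
      rw [greedyUsed_eq_image, show ((((k : ℤ) - 1).toNat : ℕ) : ℤ) = k - 1 by omega]
      refine Finset.image_congr fun i hi => ?_
      rw [Finset.coe_Icc, Set.mem_Icc] at hi
      obtain ⟨m, rfl⟩ : ∃ m : ℕ, i = m := ⟨i.toNat, by omega⟩
      exact (ih m (by omega) (by omega) (by omega)).symm
    rw [greedyWin, hprefix, ha.greedyStep_eq hw hj hjn]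

end AvoidsFive

/-- For `w ∈ B_n` avoiding the five signed patterns, `(Q(w), {1,…,p})`
is a type-BC unit interval order on `n` elements, and `w ↦ (Q(w), {1,…,p})` induces a
bijection from the set of such `w` onto the isomorphism classes of type-BC unit interval
orders on `n` elements. -/
theorem stmt_10 (n : ℕ) :
    (∀ w : Equiv.Perm ℤ, IsBn n w → AvoidsFive n w →
      IsBCUIO n (qltF n w) (groundedF n w)) ∧
    (∀ v w : Equiv.Perm ℤ, IsBn n v → AvoidsFive n v → IsBn n w → AvoidsFive n w →
      BCIso n (qltF n v) (qltF n w) (groundedF n v) (groundedF n w) → v = w) ∧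
    (∀ (lt : Fin n → Fin n → Prop) (g : Set (Fin n)), IsBCUIO n lt g →
      ∃ w : Equiv.Perm ℤ, IsBn n w ∧ AvoidsFive n w ∧
        BCIso n (qltF n w) lt (groundedF n w) g) := by
  refine ⟨fun w hw ha => (ha.isThresholdSeq_mval hw).isBCUIO_thresholdLT, ?_, fun lt g h => ?_⟩
  · intro v w hv hva hw hwa hiso
    obtain ⟨hp, hM⟩ := (hva.isThresholdSeq_mval hv).eq_of_bcIso (hwa.isThresholdSeq_mval hw) hiso
    refine hv.ext hw fun i hi hin => ?_
    rw [hva.eq_greedyWin hv hi hin, hwa.eq_greedyWin hw hi hin, hp,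
      greedyWin_congr hi fun k hk0 hki => hM k hk0 (hki.trans hin)]
  · obtain ⟨w, hw, ha, hp, hM⟩ := h.isThresholdSeq_bcSeq.exists_window
    have hlt : qltF n w = ThresholdLT (bcSeq lt g) := by
      funext i j
      rw [qltF, ThresholdLT, hM _ (by omega) (by omega)]
    have hg : groundedF n w = groundedSet g.ncard := by
      rw [← hp]
      rfl
    exact ⟨w, hw, ha, hlt ▸ hg ▸ h.bcIso_bcSeq⟩
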